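/- Let $(X_t)$ be a Markov chain on a finite state space $V$, $I \subseteq V$ finite with $X_0 \notin I$, and for each $v \in I$ let $H_v(k) = \prod_{i=0}^k(1-p(X_i,v))$ (with $H_v(-1)=1$), $r_v$ the first time $H_v$ drops below a fixed threshold $\lambda/L \in (0,1]$, and $T_v$ the hitting time of $v$. Define $S_k^I = \mathbf{1}\{\forall v \in I : T_v > k\wedge r_v\}\prod_{v\in I}H_v(k\wedge r_v - 1)^{-1}$. Then $(S_k^I)_{k\ge 0}$ is a supermartingale with respect to the natural filtration of $(X_t)$. -/

import Mathlib

/-!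
On the event that `S_k ≠ 0`, a step of the chain from `x = X_k` to `y` either hits a target
`v ∈ J` whose clock `k ∧ r_v` is still running (then `S_{k+1} = 0`), or multiplies `S_k` by
`∏_{v ∈ J} (1 - p(x,v))⁻¹`. Hence `E[S_{k+1} | ℱ_k] = (1 - ∑_{v ∈ J} p(x,v)) ∏_{v ∈ J} (1 - p(x,v))⁻¹ S_k`,
and the factor is at most `1` by `1 - ∑ f ≤ ∏ (1 - f)` for `0 ≤ f ≤ 1`.
-/

open Finset

/-- `HmP p ω v t = ∏_{i<t} (1 - p(ω_i,v))`, i.e. `H_v(t-1)` with `H_v(-1)=1`. -/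
noncomputable def HmP {V : Type*} (p : V → V → ℝ) (ω : ℕ → V) (v : V) (t : ℕ) : ℝ :=
  ∏ i ∈ Finset.range t, (1 - p (ω i) v)

/-- `minKR p c ω v k = min k r_v`, where `r_v = min{t : H_v(t) < c}`
(`= ∞` if no such `t`). -/
noncomputable def minKR {V : Type*} (p : V → V → ℝ) (c : ℝ)
    (ω : ℕ → V) (v : V) (k : ℕ) : ℕ :=
  sInf ({t : ℕ | HmP p ω v (t + 1) < c} ∪ {k})

open scoped Classical in
/-- `S_k^I = 1{∀ v ∈ I : T_v > k ∧ r_v} ∏_{v∈I} H_v(k ∧ r_v - 1)⁻¹` evaluated on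
the trajectory `ω`. -/
noncomputable def Sproc {V : Type*} (p : V → V → ℝ) (c : ℝ) (I : Finset V)
    (k : ℕ) (ω : ℕ → V) : ℝ :=
  (if ∀ v ∈ I, ∀ t ≤ minKR p c ω v k, ω t ≠ v then (1 : ℝ) else 0) *
    ∏ v ∈ I, (HmP p ω v (minKR p c ω v k))⁻¹

theorem one_sub_sum_le_prod_one_sub {ι R : Type*} [CommRing R] [LinearOrder R]
    [IsStrictOrderedRing R] (s : Finset ι) {f : ι → R}
    (h0 : ∀ i ∈ s, 0 ≤ f i) (h1 : ∀ i ∈ s, f i ≤ 1) :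
    1 - ∑ i ∈ s, f i ≤ ∏ i ∈ s, (1 - f i) := by
  induction s using Finset.cons_induction with
  | empty => simp
  | cons a s ha ih =>
    rw [sum_cons, prod_cons]
    have ih := ih (fun i hi => h0 i (mem_cons_of_mem hi)) (fun i hi => h1 i (mem_cons_of_mem hi))
    have ha0 := h0 a (mem_cons_self a s)
    have ha1 := h1 a (mem_cons_self a s)
    have hs0 : 0 ≤ ∑ i ∈ s, f i := sum_nonneg fun i hi => h0 i (mem_cons_of_mem hi)
    nlinarith [mul_le_mul_of_nonneg_left ih (sub_nonneg.2 ha1), mul_nonneg ha0 hs0]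

theorem one_sub_sum_mul_inv_prod_one_sub_le_one {ι K : Type*} [Field K] [LinearOrder K]
    [IsStrictOrderedRing K] (s : Finset ι) {f : ι → K}
    (h0 : ∀ i ∈ s, 0 ≤ f i) (h1 : ∀ i ∈ s, f i ≤ 1) :
    (1 - ∑ i ∈ s, f i) * (∏ i ∈ s, (1 - f i))⁻¹ ≤ 1 :=
  mul_inv_le_one_of_le₀ (one_sub_sum_le_prod_one_sub s h0 h1)
    (prod_nonneg fun i hi => sub_nonneg.2 (h1 i hi))

theorem Nat.sInf_union_singleton_congr {A B : Set ℕ} {m : ℕ}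
    (h : ∀ t < m, t ∈ A ↔ t ∈ B) : sInf (A ∪ {m}) = sInf (B ∪ {m}) := by
  have key : ∀ {A B : Set ℕ}, (∀ t < m, t ∈ A ↔ t ∈ B) → sInf (A ∪ {m}) ≤ sInf (B ∪ {m}) := by
    intro A B h
    rcases Nat.sInf_mem (s := B ∪ {m}) ⟨m, Or.inr rfl⟩ with hB | hm
    · rcases lt_or_ge (sInf (B ∪ {m})) m with hlt | hge
      · exact Nat.sInf_le (Or.inl ((h _ hlt).2 hB))
      · exact (Nat.sInf_le (Or.inr rfl)).trans hge
    · rw [Set.mem_singleton_iff.1 hm]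
      exact Nat.sInf_le (Or.inr rfl)
  exact le_antisymm (key h) (key fun t ht => (h t ht).symm)

section Chain

variable {V : Type*} (p : V → V → ℝ) (c : ℝ)

theorem HmP_congr {ω ω' : ℕ → V} (v : V) {t : ℕ} (h : ∀ i < t, ω i = ω' i) :
    HmP p ω v t = HmP p ω' v t :=
  prod_congr rfl fun i hi => by rw [h i (mem_range.1 hi)]

theorem HmP_update_of_le (ω : ℕ → V) (v y : V) {n t : ℕ} (ht : t ≤ n) :
    HmP p (Function.update ω n y) v t = HmP p ω v t :=
  HmP_congr p v fun _ hi => Function.update_of_ne (by omega) y ω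

theorem HmP_nonneg (hp : ∀ u v, p u v ≤ 1) (ω : ℕ → V) (v : V) (t : ℕ) : 0 ≤ HmP p ω v t :=
  prod_nonneg fun _ _ => sub_nonneg.2 (hp _ _)

theorem minKR_mem (ω : ℕ → V) (v : V) (k : ℕ) :
    minKR p c ω v k ∈ {t : ℕ | HmP p ω v (t + 1) < c} ∪ {k} :=
  Nat.sInf_mem ⟨k, Or.inr rfl⟩

theorem minKR_le (ω : ℕ → V) (v : V) (k : ℕ) : minKR p c ω v k ≤ k :=
  Nat.sInf_le (Or.inr rfl)

theorem minKR_mono (ω : ℕ → V) (v : V) : Monotone (minKR p c ω v) := by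
  intro k k' hk
  rcases minKR_mem p c ω v k' with hs | hk'
  · exact Nat.sInf_le (Or.inl hs)
  · rw [Set.mem_singleton_iff.1 hk']
    exact (minKR_le p c ω v k).trans hk

theorem minKR_succ_eq_or (ω : ℕ → V) (v : V) (k : ℕ) :
    minKR p c ω v (k + 1) = minKR p c ω v k ∨
      minKR p c ω v k = k ∧ minKR p c ω v (k + 1) = k + 1 := by
  have hmono := minKR_mono p c ω v (Nat.le_add_right k 1)
  have hle := minKR_le p c ω v (k + 1)
  rcases minKR_mem p c ω v k with hs | hk
  · exact Or.inl (le_antisymm (Nat.sInf_le (Or.inl hs)) hmono)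
  · rw [Set.mem_singleton_iff.1 hk] at hmono ⊢
    omega

theorem minKR_congr {ω ω' : ℕ → V} (v : V) {k : ℕ} (h : ∀ i < k, ω i = ω' i) :
    minKR p c ω v k = minKR p c ω' v k :=
  Nat.sInf_union_singleton_congr fun t ht => by
    show _ < c ↔ _ < c
    rw [HmP_congr p v fun i hi => h i (by omega)]

theorem minKR_update (ω : ℕ → V) (v y : V) (k : ℕ) :
    minKR p c (Function.update ω k y) v k = minKR p c ω v k :=
  minKR_congr p c v fun _ hi => Function.update_of_ne hi.ne y ω

theorem HmP_minKR_succ (ω : ℕ → V) (v : V) (k : ℕ) :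
    HmP p ω v (minKR p c ω v (k + 1)) =
      (if minKR p c ω v (k + 1) = k + 1 then 1 - p (ω k) v else 1) *
        HmP p ω v (minKR p c ω v k) := by
  rcases minKR_succ_eq_or p c ω v k with h | ⟨hk, hk1⟩
  · have : minKR p c ω v (k + 1) ≠ k + 1 := by have := minKR_le p c ω v k; omega
    rw [if_neg this, one_mul, h]
  · rw [if_pos hk1, hk1, hk, HmP, prod_range_succ, mul_comm]
    rfl

/-- The event `{∀ v ∈ I, T_v > k ∧ r_v}`. -/
def Avoids (I : Finset V) (k : ℕ) (ω : ℕ → V) : Prop :=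
  ∀ v ∈ I, ∀ t ≤ minKR p c ω v k, ω t ≠ v

/-- The targets `v ∈ I` with `r_v > k`. -/
noncomputable def runningAt (I : Finset V) (ω : ℕ → V) (k : ℕ) : Finset V :=
  I.filter fun v => minKR p c ω v (k + 1) = k + 1

open scoped Classical in
theorem Sproc_eq (I : Finset V) (k : ℕ) (ω : ℕ → V) :
    Sproc p c I k ω =
      (if Avoids p c I k ω then 1 else 0) * (∏ v ∈ I, HmP p ω v (minKR p c ω v k))⁻¹ := by
  rw [Sproc, prod_inv_distrib]
  exact congrArg (· * _) (if_congr Iff.rfl rfl rfl)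

theorem Sproc_nonneg (hp : ∀ u v, p u v ≤ 1) (I : Finset V) (k : ℕ) (ω : ℕ → V) :
    0 ≤ Sproc p c I k ω := by
  classical
  rw [Sproc_eq]
  exact mul_nonneg (by split_ifs <;> norm_num)
    (inv_nonneg.2 (prod_nonneg fun v _ => HmP_nonneg p hp ω v _))

theorem avoids_succ_update_iff (I : Finset V) (k : ℕ) (ω : ℕ → V) (y : V) :
    Avoids p c I (k + 1) (Function.update ω (k + 1) y) ↔
      Avoids p c I k ω ∧ y ∉ runningAt p c I ω k := by
  simp only [Avoids, runningAt, minKR_update, mem_filter, not_and]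
  constructor
  · intro h
    refine ⟨fun v hv t ht => ?_, fun hyI hy => h y hyI (k + 1) hy.ge (Function.update_self ..)⟩
    have htk : t ≤ k := ht.trans (minKR_le p c ω v k)
    rw [← Function.update_of_ne (show t ≠ k + 1 by omega) y ω]
    exact h v hv t (ht.trans (minKR_mono p c ω v (Nat.le_add_right k 1)))
  · rintro ⟨h, hy⟩ v hv t ht
    rcases minKR_succ_eq_or p c ω v k with heq | ⟨hk, hk1⟩
    · have htk : t ≤ k := (heq ▸ ht).trans (minKR_le p c ω v k)
      rw [Function.update_of_ne (show t ≠ k + 1 by omega)]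
      exact h v hv t (heq ▸ ht)
    · rcases (hk1 ▸ ht).lt_or_eq with hlt | rfl
      · rw [Function.update_of_ne hlt.ne]
        exact h v hv t (by omega)
      · rw [Function.update_self]
        rintro rfl
        exact hy hv hk1

theorem prod_HmP_minKR_succ_update (I : Finset V) (k : ℕ) (ω : ℕ → V) (y : V) :
    ∏ v ∈ I, HmP p (Function.update ω (k + 1) y) v
        (minKR p c (Function.update ω (k + 1) y) v (k + 1)) =
      (∏ v ∈ runningAt p c I ω k, (1 - p (ω k) v)) *
        ∏ v ∈ I, HmP p ω v (minKR p c ω v k) := by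
  simp only [minKR_update, HmP_update_of_le p ω _ y (minKR_le p c ω _ _), HmP_minKR_succ,
    prod_mul_distrib, runningAt, prod_filter]

open scoped Classical in
theorem Sproc_succ_update (I : Finset V) (k : ℕ) (ω : ℕ → V) (y : V) :
    Sproc p c I (k + 1) (Function.update ω (k + 1) y) =
      (if y ∈ runningAt p c I ω k then 0 else (∏ v ∈ runningAt p c I ω k, (1 - p (ω k) v))⁻¹) *
        Sproc p c I k ω := by
  rw [Sproc_eq, Sproc_eq, avoids_succ_update_iff, prod_HmP_minKR_succ_update, mul_inv]
  by_cases hy : y ∈ runningAt p c I ω k <;> by_cases hA : Avoids p c I k ω <;> simp [hy, hA]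

end Chain

theorem Sproc_supermartingale_general {V : Type*} [Fintype V]
    (p : V → V → ℝ) (hp0 : ∀ u x : V, 0 ≤ p u x)
    (hrow : ∀ u : V, ∑ x : V, p u x = 1)
    (I : Finset V)
    (c : ℝ)
    (k : ℕ) (ω : ℕ → V) :
    ∑ y : V, p (ω k) y * Sproc p c I (k + 1) (Function.update ω (k + 1) y)
      ≤ Sproc p c I k ω := by
  classical
  have hp_le : ∀ u x, p u x ≤ 1 := fun u x =>
    hrow u ▸ single_le_sum (fun y _ => hp0 u y) (mem_univ x)
  set J := runningAt p c I ω k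
  have hmass : ∑ y, (if y ∈ J then 0 else p (ω k) y) = 1 - ∑ v ∈ J, p (ω k) v := by
    rw [sum_ite, sum_const_zero, zero_add, filter_not, filter_mem_eq_inter, univ_inter,
      ← compl_eq_univ_sdiff, ← hrow (ω k), ← sum_compl_add_sum J, add_sub_cancel_right]
  calc ∑ y, p (ω k) y * Sproc p c I (k + 1) (Function.update ω (k + 1) y)
      = ((1 - ∑ v ∈ J, p (ω k) v) * (∏ v ∈ J, (1 - p (ω k) v))⁻¹) * Sproc p c I k ω := by
        simp only [Sproc_succ_update, ← hmass, sum_mul]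
        refine sum_congr rfl fun y _ => ?_
        split_ifs <;> ring
    _ ≤ Sproc p c I k ω :=
        mul_le_of_le_one_left (Sproc_nonneg p c hp_le I k ω)
          (one_sub_sum_mul_inv_prod_one_sub_le_one J (fun v _ => hp0 _ v) fun v _ => hp_le _ v)

/-- `S_k^I` is a supermartingale for the natural filtration of the chain: for
every time `k` and trajectory `ω` with `ω 0 ∉ I`, the conditional expectation of
`S_{k+1}^I` given the history `ω_0,…,ω_k` is at most `S_k^I`. -/
theorem Sproc_supermartingale {V : Type*} [Fintype V]
    (p : V → V → ℝ) (hp0 : ∀ u x : V, 0 ≤ p u x)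
    (hrow : ∀ u : V, ∑ x : V, p u x = 1)
    (I : Finset V) (hp1 : ∀ u v : V, v ∈ I → u ≠ v → p u v < 1)
    (c : ℝ) (hc0 : 0 < c) (hc1 : c ≤ 1)
    (k : ℕ) (ω : ℕ → V) (hω0 : ω 0 ∉ I) :
    ∑ y : V, p (ω k) y * Sproc p c I (k + 1) (Function.update ω (k + 1) y)
      ≤ Sproc p c I k ω :=
  Sproc_supermartingale_general p hp0 hrow I c k ω
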